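/- Let d ≥ 1, let p : ℝ^d → ℝ be a continuous probability density with compact support K, and let π : ℝ^d → ℝ be a strictly positive density with log π of class C¹. Let S, V : ℝ^d → ℝ^d be C¹ maps such that det(I + DS(x)) ≠ 0 for all x ∈ K. Define, for τ in a neighbourhood of 0, J(τ) := −∫ p(x) ( log π(x + S(x) + τ V(x)) + log |det( I + DS(x) + τ DV(x) )| ) dx. Then J has derivative at τ = 0 equal to −∫ p(x) [ ⟪∇(log π)(x + S(x)), V(x)⟫ + trace( (I + DS(x))⁻¹ · DV(x) ) ] dx. -/

import Mathlib

open MeasureTheory Matrix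
open scoped ENNReal

/-- The Jacobian matrix of a map `S : ℝ^d → ℝ^d` at `x`. -/
noncomputable def jacobian {d : ℕ} (S : (Fin d → ℝ) → (Fin d → ℝ)) (x : Fin d → ℝ) :
    Matrix (Fin d) (Fin d) ℝ :=
  Matrix.of fun i j => fderiv ℝ S x (Pi.single j 1) i

/-- The gradient of `f : ℝ^d → ℝ` at `x`. -/
noncomputable def grad {d : ℕ} (f : (Fin d → ℝ) → ℝ) (x : Fin d → ℝ) : Fin d → ℝ :=
  fun i => fderiv ℝ f x (Pi.single i 1)

noncomputable def detCMM (d : ℕ) : ContinuousMultilinearMap ℝ (fun _ : Fin d => Fin d → ℝ) ℝ :=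
  MultilinearMap.mkContinuous
    (Matrix.detRowAlternating : (Fin d → ℝ) [⋀^Fin d]→ₗ[ℝ] ℝ).toMultilinearMap
    (Nat.factorial d) (fun m => by
      have hdet : (Matrix.detRowAlternating : (Fin d → ℝ) [⋀^Fin d]→ₗ[ℝ] ℝ).toMultilinearMap m
          = Matrix.det (Matrix.of m) := rfl
      rw [hdet, Matrix.det_apply]
      calc ‖∑ σ : Equiv.Perm (Fin d), Equiv.Perm.sign σ • ∏ i, Matrix.of m (σ i) i‖
          ≤ ∑ σ : Equiv.Perm (Fin d), ‖Equiv.Perm.sign σ • ∏ i, Matrix.of m (σ i) i‖ :=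
            norm_sum_le _ _
        _ ≤ ∑ _σ : Equiv.Perm (Fin d), ∏ i, ‖m i‖ := by
            refine Finset.sum_le_sum fun σ _ => ?_
            have h1 : ‖Equiv.Perm.sign σ • ∏ i, Matrix.of m (σ i) i‖
                = ‖∏ i, m (σ i) i‖ := by
              rcases Int.units_eq_one_or (Equiv.Perm.sign σ) with h | h <;>
                simp [h, Units.smul_def]
            rw [h1, norm_prod]
            have h3 : ∏ i, ‖m (σ i) i‖ = ∏ i, ‖m i (σ⁻¹ i)‖ := by
              rw [← Equiv.prod_comp σ (fun i => ‖m i (σ⁻¹ i)‖)]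
              simp
            rw [h3]
            exact Finset.prod_le_prod (fun i _ => norm_nonneg _)
              (fun i _ => norm_le_pi_norm (m i) (σ⁻¹ i))
        _ = (Nat.factorial d : ℝ) * ∏ i, ‖m i‖ := by
            rw [Finset.sum_const, Finset.card_univ, Fintype.card_perm, Fintype.card_fin,
              nsmul_eq_mul])

lemma detCMM_apply {d : ℕ} (m : Fin d → Fin d → ℝ) :
    detCMM d m = Matrix.det (Matrix.of m) := rfl

lemma sum_det_updateRow {d : ℕ} (M B : Matrix (Fin d) (Fin d) ℝ) :
    ∑ i, (M.updateRow i (B i)).det = (M.adjugate * B).trace := by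
  have h : ∀ i, (M.updateRow i (B i)).det = ∑ j, M.adjugate j i * B i j := by
    intro i
    rw [← Matrix.det_transpose, ← Matrix.updateCol_transpose, ← Matrix.cramer_apply,
      Matrix.cramer_eq_adjugate_mulVec, Matrix.mulVec, ← Matrix.adjugate_transpose]
    simp [dotProduct, Matrix.transpose_apply, mul_comm]
  simp_rw [h]
  rw [Matrix.trace, Finset.sum_comm]
  simp [Matrix.diag, Matrix.mul_apply]

lemma det_hasDerivAt {d : ℕ} (A B : Matrix (Fin d) (Fin d) ℝ) (t : ℝ) :
    HasDerivAt (fun s : ℝ => (A + s • B).det) (((A + t • B).adjugate * B).trace) t := by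
  have hc : HasDerivAt (fun s : ℝ => (fun i => A i + s • B i : Fin d → Fin d → ℝ))
      (B : Fin d → Fin d → ℝ) t := by
    refine hasDerivAt_pi.2 fun i => ?_
    simpa using ((hasDerivAt_id t).smul_const (B i)).const_add (A i)
  have hd := (detCMM d).hasFDerivAt (x := fun i => A i + t • B i)
  have key := hd.comp_hasDerivAt t hc
  have heq : ∀ s : ℝ, (fun i => A i + s • B i : Fin d → Fin d → ℝ) = (A + s • B) := by
    intro s; funext i j; simp [Matrix.add_apply, Matrix.smul_apply]
  have h1 : (fun s : ℝ => detCMM d (fun i => A i + s • B i)) = fun s : ℝ => (A + s • B).det := by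
    funext s; rw [detCMM_apply]; congr 1
  simp only [Function.comp_def] at key
  rw [h1] at key
  refine key.congr_deriv ?_
  symm
  erw [ContinuousMultilinearMap.linearDeriv_apply]
  have h2 : ∀ i, (Function.update (fun i => A i + t • B i : Fin d → Fin d → ℝ) i (B i))
      = ((A + t • B).updateRow i (B i) : Matrix (Fin d) (Fin d) ℝ) := by
    intro i; rw [heq t]; rfl
  simp_rw [detCMM_apply, h2]
  exact (sum_det_updateRow (A + t • B) B).symm

lemma clm_eq_dot {d : ℕ} (L : (Fin d → ℝ) →L[ℝ] ℝ) (v : Fin d → ℝ) :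
    (fun i => L (Pi.single i 1)) ⬝ᵥ v = L v := by
  have hv : v = ∑ i, v i • (Pi.single i (1 : ℝ) : Fin d → ℝ) := by
    funext j
    simp [Pi.single_apply, Finset.sum_ite_eq']
  conv_rhs => rw [hv, map_sum]
  simp [dotProduct, _root_.map_smul, smul_eq_mul, mul_comm]

lemma trace_inv_eq {d : ℕ} (M N : Matrix (Fin d) (Fin d) ℝ) :
    (M.adjugate * N).trace / M.det = (M⁻¹ * N).trace := by
  rw [Matrix.inv_def, Matrix.smul_mul, Matrix.trace_smul, Ring.inverse_eq_inv', smul_eq_mul,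
    div_eq_inv_mul]

/-- The derivative at `τ = 0` of
`J(τ) = −∫ p(x)(log π(x + S x + τ V x) + log |det(I + DS(x) + τ DV(x))|) dx` equals
`−∫ p(x) [⟪∇ log π(x + S x), V x⟫ + trace((I + DS(x))⁻¹ DV(x))] dx`. -/
theorem hasDerivAt_first_variation_at_S {d : ℕ} (hd : 1 ≤ d)
    (p : (Fin d → ℝ) → ℝ) (hp_cont : Continuous p) (hp_nonneg : ∀ x, 0 ≤ p x)
    (hp_supp : HasCompactSupport p) (hp_int : ∫ x, p x = 1)
    (π : (Fin d → ℝ) → ℝ) (hπ_pos : ∀ x, 0 < π x) (hπ_int : ∫ x, π x = 1)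
    (hπ_smooth : ContDiff ℝ 1 fun x => Real.log (π x))
    (S V : (Fin d → ℝ) → (Fin d → ℝ)) (hS : ContDiff ℝ 1 S) (hV : ContDiff ℝ 1 V)
    (hdet : ∀ x ∈ tsupport p,
      ((1 : Matrix (Fin d) (Fin d) ℝ) + jacobian S x).det ≠ 0) :
    HasDerivAt
      (fun τ : ℝ =>
        -∫ x, p x * (Real.log (π (x + S x + τ • V x)) +
          Real.log |((1 : Matrix (Fin d) (Fin d) ℝ) + jacobian S x + τ • jacobian V x).det|))
      (-∫ x, p x *
        ((grad (fun z => Real.log (π z)) (x + S x)) ⬝ᵥ V x +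
          (((1 : Matrix (Fin d) (Fin d) ℝ) + jacobian S x)⁻¹ * jacobian V x).trace))
      0 := by
  classical
  set f : (Fin d → ℝ) → ℝ := fun z => Real.log (π z) with hfdef
  have hf : ContDiff ℝ 1 f := hπ_smooth
  have hjac : ∀ (W : (Fin d → ℝ) → (Fin d → ℝ)), ContDiff ℝ 1 W →
      Continuous fun x => jacobian W x := by
    intro W hW
    apply continuous_matrix
    intro i j
    exact (continuous_apply i).comp
      ((hW.continuous_fderiv one_ne_zero).clm_apply continuous_const)
  have hAcont : Continuous fun x => (1 : Matrix (Fin d) (Fin d) ℝ) + jacobian S x :=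
    continuous_const.add (hjac S hS)
  have hBcont : Continuous fun x => jacobian V x := hjac V hV
  set K := tsupport p with hKdef
  have hKc : IsCompact K := hp_supp
  have hφ : Continuous fun q : ℝ × (Fin d → ℝ) =>
      ((1 : Matrix (Fin d) (Fin d) ℝ) + jacobian S q.2 + q.1 • jacobian V q.2).det :=
    ((hAcont.comp continuous_snd).add
      (continuous_fst.smul (hBcont.comp continuous_snd))).matrix_det
  have hWopen : IsOpen ((fun q : ℝ × (Fin d → ℝ) =>
      ((1 : Matrix (Fin d) (Fin d) ℝ) + jacobian S q.2 + q.1 • jacobian V q.2).det) ⁻¹'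
        {(0 : ℝ)}ᶜ) :=
    isOpen_compl_singleton.preimage hφ
  have hsub : ({(0 : ℝ)} : Set ℝ) ×ˢ K ⊆ (fun q : ℝ × (Fin d → ℝ) =>
      ((1 : Matrix (Fin d) (Fin d) ℝ) + jacobian S q.2 + q.1 • jacobian V q.2).det) ⁻¹'
        {(0 : ℝ)}ᶜ := by
    rintro ⟨τ, x⟩ ⟨hτ, hx⟩
    simp only [Set.mem_singleton_iff] at hτ
    subst hτ
    simp only [Set.mem_preimage, Set.mem_compl_iff, Set.mem_singleton_iff, zero_smul, add_zero]
    exact hdet x hx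
  obtain ⟨u, v, hu, hv, h0u, hKv, huv⟩ :=
    generalized_tube_lemma isCompact_singleton hKc hWopen hsub
  obtain ⟨ε, hε, hball⟩ := Metric.isOpen_iff.1 hu 0 (h0u rfl)
  set δ := ε / 2 with hδdef
  have hδ : 0 < δ := by positivity
  have hIcc : Set.Icc (-δ) δ ⊆ u := by
    intro τ hτ
    apply hball
    rw [Metric.mem_ball, Real.dist_eq, sub_zero]
    have h := abs_le.2 ⟨hτ.1, hτ.2⟩
    linarith
  set T := Set.Icc (-δ) δ ×ˢ K with hTdef
  have hTc : IsCompact T := isCompact_Icc.prod hKc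
  have hTdet : ∀ q ∈ T,
      ((1 : Matrix (Fin d) (Fin d) ℝ) + jacobian S q.2 + q.1 • jacobian V q.2).det ≠ 0 :=
    fun q hq => huv ⟨hIcc hq.1, hKv hq.2⟩
  have hdetA_v : ∀ x ∈ v, ((1 : Matrix (Fin d) (Fin d) ℝ) + jacobian S x).det ≠ 0 := by
    intro x hxv
    have h := huv (Set.mk_mem_prod (h0u rfl) hxv)
    simpa using h
  set F : ℝ → (Fin d → ℝ) → ℝ := fun τ x =>
    p x * (Real.log (π (x + S x + τ • V x)) +
      Real.log |((1 : Matrix (Fin d) (Fin d) ℝ) + jacobian S x + τ • jacobian V x).det|)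
    with hFdef
  set F' : ℝ → (Fin d → ℝ) → ℝ := fun τ x =>
    p x * (fderiv ℝ f (x + S x + τ • V x) (V x) +
      (((1 : Matrix (Fin d) (Fin d) ℝ) + jacobian S x + τ • jacobian V x).adjugate *
        jacobian V x).trace /
      ((1 : Matrix (Fin d) (Fin d) ℝ) + jacobian S x + τ • jacobian V x).det) with hF'def
  have h0inner : Continuous fun x : Fin d → ℝ => x + S x + (0 : ℝ) • V x :=
    (continuous_id.add hS.continuous).add (hV.continuous.const_smul (0 : ℝ))
  -- continuity of F' on T
  have hGcont : ContinuousOn (fun q : ℝ × (Fin d → ℝ) => F' q.1 q.2) T := by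
    simp only [hF'def]
    have hc1 : Continuous fun q : ℝ × (Fin d → ℝ) => p q.2 := hp_cont.comp continuous_snd
    have hinner : Continuous fun q : ℝ × (Fin d → ℝ) => q.2 + S q.2 + q.1 • V q.2 :=
      (continuous_snd.add (hS.continuous.comp continuous_snd)).add
        (continuous_fst.smul (hV.continuous.comp continuous_snd))
    have hc2 : Continuous fun q : ℝ × (Fin d → ℝ) =>
        fderiv ℝ f (q.2 + S q.2 + q.1 • V q.2) (V q.2) :=
      ((hf.continuous_fderiv one_ne_zero).comp hinner).clm_apply (hV.continuous.comp continuous_snd)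
    have hABq : Continuous fun q : ℝ × (Fin d → ℝ) =>
        ((1 : Matrix (Fin d) (Fin d) ℝ) + jacobian S q.2 + q.1 • jacobian V q.2) :=
      (hAcont.comp continuous_snd).add (continuous_fst.smul (hBcont.comp continuous_snd))
    have hc3 : Continuous fun q : ℝ × (Fin d → ℝ) =>
        (((1 : Matrix (Fin d) (Fin d) ℝ) + jacobian S q.2 + q.1 • jacobian V q.2).adjugate *
          jacobian V q.2).trace :=
      (hABq.matrix_adjugate.matrix_mul (hBcont.comp continuous_snd)).matrix_trace
    exact hc1.continuousOn.mul (hc2.continuousOn.add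
      (hc3.continuousOn.div hφ.continuousOn hTdet))
  obtain ⟨C, hC⟩ := hTc.exists_bound_of_continuousOn hGcont
  set bound : (Fin d → ℝ) → ℝ := K.indicator fun _ => C with hbdef
  have hbound_int : Integrable bound := by
    rw [hbdef, integrable_indicator_iff hKc.measurableSet]
    exact integrableOn_const hKc.measure_lt_top.ne
  have h_bound : ∀ x, ∀ τ ∈ Metric.ball (0 : ℝ) δ, ‖F' τ x‖ ≤ bound x := by
    intro x τ hτ
    by_cases hx : x ∈ K
    · have hτIcc : τ ∈ Set.Icc (-δ) δ := by
        rw [Metric.mem_ball, Real.dist_eq, sub_zero] at hτ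
        exact abs_le.1 hτ.le
      have h := hC (τ, x) ⟨hτIcc, hx⟩
      simpa [hbdef, Set.indicator_of_mem hx] using h
    · have hp0 : p x = 0 := image_eq_zero_of_notMem_tsupport hx
      simp [hF'def, hp0, hbdef, Set.indicator_of_notMem hx]
  have hFmeas : ∀ τ : ℝ, AEStronglyMeasurable (F τ) volume := by
    intro τ
    simp only [hFdef]
    apply Measurable.aestronglyMeasurable
    apply hp_cont.measurable.mul
    apply Measurable.add
    · have hinnerτ : Continuous fun x : Fin d → ℝ => x + S x + τ • V x :=
        (continuous_id.add hS.continuous).add (hV.continuous.const_smul τ)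
      exact (hf.continuous.comp hinnerτ).measurable
    · have hdetτ : Continuous fun x : Fin d → ℝ =>
          ((1 : Matrix (Fin d) (Fin d) ℝ) + jacobian S x + τ • jacobian V x).det :=
        (hAcont.add (hBcont.const_smul τ)).matrix_det
      exact Real.measurable_log.comp (continuous_abs.comp hdetτ).measurable
  have hFint : Integrable (F 0) := by
    have hcont : Continuous (F 0) := by
      simp only [hFdef]
      rw [continuous_iff_continuousAt]
      intro x
      by_cases hxv : x ∈ v
      · have h1 : ContinuousAt (fun x : Fin d → ℝ =>
            Real.log (π (x + S x + (0 : ℝ) • V x))) x :=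
          (hf.continuous.comp h0inner).continuousAt
        have hdetc : Continuous fun x : Fin d → ℝ =>
            ((1 : Matrix (Fin d) (Fin d) ℝ) + jacobian S x + (0 : ℝ) • jacobian V x).det :=
          (hAcont.add (hBcont.const_smul (0 : ℝ))).matrix_det
        have hdx : ((1 : Matrix (Fin d) (Fin d) ℝ) + jacobian S x + (0 : ℝ) • jacobian V x).det
            ≠ 0 := by simpa using hdetA_v x hxv
        have h2 : ContinuousAt (fun x : Fin d → ℝ =>
            Real.log |((1 : Matrix (Fin d) (Fin d) ℝ) + jacobian S x +
              (0 : ℝ) • jacobian V x).det|) x :=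
          ContinuousAt.comp (g := Real.log)
            (f := fun x : Fin d → ℝ => |((1 : Matrix (Fin d) (Fin d) ℝ) + jacobian S x +
              (0 : ℝ) • jacobian V x).det|)
            (Real.continuousAt_log (abs_ne_zero.2 hdx)) hdetc.abs.continuousAt
        exact hp_cont.continuousAt.mul (h1.add h2)
      · have hxK : x ∉ K := fun h => hxv (hKv h)
        have hev : ∀ᶠ y in nhds x, p y * (Real.log (π (y + S y + (0 : ℝ) • V y)) +
            Real.log |((1 : Matrix (Fin d) (Fin d) ℝ) + jacobian S y +
              (0 : ℝ) • jacobian V y).det|) = 0 := by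
          filter_upwards [(isClosed_tsupport p).isOpen_compl.mem_nhds hxK] with y hy
          simp [image_eq_zero_of_notMem_tsupport hy]
        exact Filter.EventuallyEq.continuousAt (y := (0:ℝ)) hev
    have hsupp : HasCompactSupport (F 0) := by
      apply HasCompactSupport.intro hKc
      intro x hx
      simp [hFdef, image_eq_zero_of_notMem_tsupport hx]
    exact hcont.integrable_of_hasCompactSupport hsupp
  have hF'meas : AEStronglyMeasurable (F' 0) volume := by
    simp only [hF'def]
    apply Measurable.aestronglyMeasurable
    apply hp_cont.measurable.mul
    apply Measurable.add
    · exact (((hf.continuous_fderiv one_ne_zero).comp h0inner).clm_apply hV.continuous).measurable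
    · have hAB0 : Continuous fun x : Fin d → ℝ =>
          ((1 : Matrix (Fin d) (Fin d) ℝ) + jacobian S x + (0 : ℝ) • jacobian V x) :=
        hAcont.add (hBcont.const_smul (0 : ℝ))
      have hc3x : Continuous fun x : Fin d → ℝ =>
          (((1 : Matrix (Fin d) (Fin d) ℝ) + jacobian S x + (0 : ℝ) • jacobian V x).adjugate *
            jacobian V x).trace :=
        (hAB0.matrix_adjugate.matrix_mul hBcont).matrix_trace
      exact hc3x.measurable.div (hAB0.matrix_det).measurable
  have h_diff : ∀ x, ∀ τ ∈ Metric.ball (0 : ℝ) δ,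
      HasDerivAt (fun τ' => F τ' x) (F' τ x) τ := by
    intro x τ hτ
    by_cases hx : x ∈ K
    · have hτIcc : τ ∈ Set.Icc (-δ) δ := by
        rw [Metric.mem_ball, Real.dist_eq, sub_zero] at hτ
        exact abs_le.1 hτ.le
      have hdet0 : ((1 : Matrix (Fin d) (Fin d) ℝ) + jacobian S x + τ • jacobian V x).det ≠ 0 :=
        hTdet (τ, x) ⟨hτIcc, hx⟩
      have hcv : HasDerivAt (fun τ' : ℝ => x + S x + τ' • V x) (V x) τ := by
        simpa using ((hasDerivAt_id τ).smul_const (V x)).const_add (x + S x)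
      have hder1 : HasDerivAt (fun τ' : ℝ => Real.log (π (x + S x + τ' • V x)))
          (fderiv ℝ f (x + S x + τ • V x) (V x)) τ := by
        have h := ((hf.differentiable one_ne_zero) (x + S x + τ • V x)).hasFDerivAt.comp_hasDerivAt
          τ hcv
        simpa [Function.comp_def, hfdef] using h
      have hder2 : HasDerivAt (fun τ' : ℝ =>
          Real.log |((1 : Matrix (Fin d) (Fin d) ℝ) + jacobian S x + τ' • jacobian V x).det|)
          ((((1 : Matrix (Fin d) (Fin d) ℝ) + jacobian S x + τ • jacobian V x).adjugate *
            jacobian V x).trace /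
            ((1 : Matrix (Fin d) (Fin d) ℝ) + jacobian S x + τ • jacobian V x).det) τ := by
        have habs : (fun τ' : ℝ => Real.log |((1 : Matrix (Fin d) (Fin d) ℝ) + jacobian S x +
            τ' • jacobian V x).det|) = fun τ' : ℝ =>
            Real.log (((1 : Matrix (Fin d) (Fin d) ℝ) + jacobian S x + τ' • jacobian V x).det) :=
          funext fun s => Real.log_abs _
        rw [habs]
        exact (det_hasDerivAt _ _ τ).log hdet0
      exact (hder1.add hder2).const_mul (p x)
    · have hp0 : p x = 0 := image_eq_zero_of_notMem_tsupport hx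
      have h1 : (fun τ' => F τ' x) = fun _ : ℝ => (0 : ℝ) := by
        funext τ'; simp [hFdef, hp0]
      have h2 : F' τ x = 0 := by simp [hF'def, hp0]
      rw [h1, h2]
      exact hasDerivAt_const τ 0
  have main := (hasDerivAt_integral_of_dominated_loc_of_deriv_le (Metric.ball_mem_nhds 0 hδ)
      (Filter.Eventually.of_forall hFmeas) hFint hF'meas
      (Filter.Eventually.of_forall h_bound) hbound_int
      (Filter.Eventually.of_forall h_diff)).2
  have hval : ∫ x, F' 0 x = ∫ x, p x *
      ((grad f (x + S x)) ⬝ᵥ V x +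
        (((1 : Matrix (Fin d) (Fin d) ℝ) + jacobian S x)⁻¹ * jacobian V x).trace) := by
    apply integral_congr_ae
    refine Filter.Eventually.of_forall fun x => ?_
    have h0 : x + S x + (0 : ℝ) • V x = x + S x := by simp
    have h1 : (1 : Matrix (Fin d) (Fin d) ℝ) + jacobian S x + (0 : ℝ) • jacobian V x
        = 1 + jacobian S x := by simp
    simp only [hF'def, h0, h1, trace_inv_eq]
    congr 2
    exact (clm_eq_dot (fderiv ℝ f (x + S x)) (V x)).symm
  have final := main.neg
  rw [hval] at final
  exact final
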